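/- Corollary 2.1: let G be a connected finite simple graph, and suppose the decision function h has nonzero true positive rate (there exists u ∈ V with y(u) = 1 and h(u) = 1) and nonzero false positive rate (there exists u ∈ V with y(u) = 0 and h(u) = 1). Let V_c and V_{c'} be two nonempty subsets of V. Then h satisfies demographic parity for V_c and V_{c'} (i.e., |{v ∈ V_c : h(v) = 1}| / |V_c| = |{v ∈ V_{c'} : h(v) = 1}| / |V_{c'}|) if and only if there exists a positive integer k such that for every δ ≥ k, fairness visibility parity holds: FV_δ(V_c) = FV_δ(V_{c'}). -/

import Mathlib

open Finset

variable {V : Type*}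

open scoped Classical in
/-- The δ-neighborhood `N_δ(v)`: vertices `u` joined to `v` by a walk of some length
`k` with `1 ≤ k ≤ δ`. -/
noncomputable def deltaNbhd (G : SimpleGraph V) [Fintype V] (δ : ℕ) (v : V) : Finset V :=
  Finset.univ.filter fun u => ∃ p : G.Walk u v, 1 ≤ p.length ∧ p.length ≤ δ

/-- The δ-neighborhood peer expectation `E_h^δ(v)` (in `ℝ`, division by zero equals
zero, matching the stated convention). -/
noncomputable def peerExpDelta (G : SimpleGraph V) [Fintype V] (y h : V → ℕ)
    (δ : ℕ) (v : V) : ℝ :=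
  if y v = 1 then
    (∑ u ∈ deltaNbhd G δ v, (y u : ℝ) * (h u : ℝ)) /
      (∑ u ∈ deltaNbhd G δ v, (y u : ℝ))
  else
    (∑ u ∈ deltaNbhd G δ v, (1 - (y u : ℝ)) * (h u : ℝ)) /
      (∑ u ∈ deltaNbhd G δ v, (1 - (y u : ℝ)))

/-- The δ-neighborhood fairness perception `f_δ(v,h)`. -/
noncomputable def fairPercDelta (G : SimpleGraph V) [Fintype V] (y h : V → ℕ)
    (δ : ℕ) (v : V) : ℕ :=
  if peerExpDelta G y h δ v ≤ (h v : ℝ) then 1 else 0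

/-- The fairness visibility `FV_δ(S)` of a group `S` of vertices: the average
δ-neighborhood fairness perception over `S`. -/
noncomputable def fairVis (G : SimpleGraph V) [Fintype V] (y h : V → ℕ)
    (δ : ℕ) (S : Finset V) : ℝ :=
  (∑ v ∈ S, (fairPercDelta G y h δ v : ℝ)) / (S.card : ℝ)

/-! For `δ ≥ |V|` every δ-neighbourhood in a connected graph with two or more vertices is all of
`V`: distinct vertices are joined by a path, and a vertex reaches itself by stepping to a
neighbour and back. The peer expectation is then the global true (or false) positive rate, which
lies in `(0, 1]` by the rate hypotheses, so `f_δ(v, h) = h(v)` and `FV_δ(S)` is the rate of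
positive decisions in `S`. -/

theorem Finset.sum_mul_div_sum_mem_Ioc {ι : Type*} {s : Finset ι} {w x : ι → ℝ}
    (hw : ∀ i ∈ s, 0 ≤ w i) (hx : ∀ i ∈ s, 0 ≤ x i ∧ x i ≤ 1)
    (hpos : ∃ i ∈ s, 0 < w i ∧ 0 < x i) :
    (∑ i ∈ s, w i * x i) / ∑ i ∈ s, w i ∈ Set.Ioc 0 1 := by
  obtain ⟨i, hi, hwi, hxi⟩ := hpos
  have hden : 0 < ∑ i ∈ s, w i := sum_pos' hw ⟨i, hi, hwi⟩
  have hnum : 0 < ∑ i ∈ s, w i * x i :=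
    sum_pos' (fun j hj => mul_nonneg (hw j hj) (hx j hj).1) ⟨i, hi, mul_pos hwi hxi⟩
  exact ⟨div_pos hnum hden, (div_le_one₀ hden).2 <|
    sum_le_sum fun j hj => mul_le_of_le_one_right (hw j hj) (hx j hj).2⟩

theorem deltaNbhd_eq_univ [Fintype V] [Nontrivial V] {G : SimpleGraph V} (hconn : G.Connected)
    {δ : ℕ} (hδ : Fintype.card V ≤ δ) (v : V) : deltaNbhd G δ v = univ := by
  ext u
  simp only [deltaNbhd, mem_filter, mem_univ, true_and, iff_true]
  by_cases huv : u = v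
  · subst huv
    obtain ⟨w, hw⟩ := hconn.preconnected.exists_adj_of_nontrivial u
    have := Fintype.one_lt_card (α := V)
    exact ⟨.cons hw (.cons hw.symm .nil), by simp, by simp; omega⟩
  · obtain ⟨p, hp⟩ := (hconn u v).exists_isPath
    exact ⟨p, Nat.pos_of_ne_zero (mt p.eq_of_length_eq_zero huv), hp.length_lt.le.trans hδ⟩

theorem peerExpDelta_mem_Ioc [Fintype V] {G : SimpleGraph V} {y h : V → ℕ}
    (hy : ∀ u, y u ≤ 1) (hh : ∀ u, h u ≤ 1) {δ : ℕ} {v : V}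
    (hTP : ∃ u ∈ deltaNbhd G δ v, y u = 1 ∧ h u = 1)
    (hFP : ∃ u ∈ deltaNbhd G δ v, y u = 0 ∧ h u = 1) :
    peerExpDelta G y h δ v ∈ Set.Ioc 0 1 := by
  have hh01 : ∀ u ∈ deltaNbhd G δ v, (0 : ℝ) ≤ h u ∧ (h u : ℝ) ≤ 1 :=
    fun u _ => ⟨Nat.cast_nonneg _, Nat.cast_le_one.2 (hh u)⟩
  unfold peerExpDelta
  split_ifs
  · obtain ⟨u, hu, hyu, hhu⟩ := hTP
    exact sum_mul_div_sum_mem_Ioc (fun _ _ => Nat.cast_nonneg _) hh01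
      ⟨u, hu, by simp [hyu], by simp [hhu]⟩
  · obtain ⟨u, hu, hyu, hhu⟩ := hFP
    exact sum_mul_div_sum_mem_Ioc (fun u _ => sub_nonneg.2 (Nat.cast_le_one.2 (hy u))) hh01
      ⟨u, hu, by simp [hyu], by simp [hhu]⟩

theorem fairPercDelta_eq_of_mem_Ioc [Fintype V] {G : SimpleGraph V} {y h : V → ℕ} {δ : ℕ}
    {v : V} (hE : peerExpDelta G y h δ v ∈ Set.Ioc 0 1) (hv : h v ≤ 1) :
    fairPercDelta G y h δ v = h v := by
  rcases Nat.le_one_iff_eq_zero_or_eq_one.1 hv with hv | hv <;>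
    simp [fairPercDelta, hv, hE.1.not_ge, hE.2]

theorem fairVis_eq_of_fairPercDelta_eq [Fintype V] {G : SimpleGraph V} {y h : V → ℕ} {δ : ℕ}
    {S : Finset V} (hf : ∀ v ∈ S, fairPercDelta G y h δ v = h v) (hh : ∀ v ∈ S, h v ≤ 1) :
    fairVis G y h δ S = ((S.filter fun v => h v = 1).card : ℝ) / (S.card : ℝ) := by
  rw [fairVis, card_filter]
  push_cast
  congr 1
  refine sum_congr rfl fun v hv => ?_
  rcases Nat.le_one_iff_eq_zero_or_eq_one.1 (hh v hv) with e | e <;> simp [hf v hv, e]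

theorem demographicParity_iff_fairVisParity_general (G : SimpleGraph V) [Fintype V]
    (hconn : G.Connected)
    (y h : V → ℕ)
    (hy : ∀ w, y w = 0 ∨ y w = 1)
    (hh : ∀ w, h w = 0 ∨ h w = 1)
    (hTPR : ∃ u : V, y u = 1 ∧ h u = 1)
    (hFPR : ∃ u : V, y u = 0 ∧ h u = 1)
    (Vc Vc' : Finset V) :
    ((Vc.filter fun v => h v = 1).card : ℝ) / (Vc.card : ℝ) =
        ((Vc'.filter fun v => h v = 1).card : ℝ) / (Vc'.card : ℝ) ↔
      ∃ k : ℕ, 0 < k ∧ ∀ δ : ℕ, k ≤ δ →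
        fairVis G y h δ Vc = fairVis G y h δ Vc' := by
  have hy₁ : ∀ w, y w ≤ 1 := fun w => (hy w).elim (·.le.trans zero_le_one) (·.le)
  have hh₁ : ∀ w, h w ≤ 1 := fun w => (hh w).elim (·.le.trans zero_le_one) (·.le)
  obtain ⟨tp, hy_tp, hh_tp⟩ := hTPR
  obtain ⟨fp, hy_fp, hh_fp⟩ := hFPR
  have : Nontrivial V := ⟨tp, fp, fun e => by simp [e, hy_fp] at hy_tp⟩
  have hrate : ∀ δ, Fintype.card V ≤ δ → ∀ S : Finset V,
      fairVis G y h δ S = ((S.filter fun v => h v = 1).card : ℝ) / (S.card : ℝ) := by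
    intro δ hδ S
    have hN := deltaNbhd_eq_univ hconn hδ
    refine fairVis_eq_of_fairPercDelta_eq (fun v _ => fairPercDelta_eq_of_mem_Ioc ?_ (hh₁ v))
      (fun v _ => hh₁ v)
    exact peerExpDelta_mem_Ioc hy₁ hh₁ ⟨tp, by simp [hN], hy_tp, hh_tp⟩
      ⟨fp, by simp [hN], hy_fp, hh_fp⟩
  constructor
  · intro hDP
    exact ⟨Fintype.card V, Fintype.card_pos, fun δ hδ => by rw [hrate δ hδ, hrate δ hδ, hDP]⟩
  · rintro ⟨k, -, hk⟩
    have hδ := le_max_right k (Fintype.card V)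
    rw [← hrate _ hδ, ← hrate _ hδ]
    exact hk _ (le_max_left _ _)

/-- Corollary 2.1: In a connected graph, if the decision function has
nonzero true positive and false positive rates, then `h` satisfies demographic parity
for two nonempty groups `Vc` and `Vc'` if and only if there exists a positive integer
`k` such that fairness visibility parity holds for every `δ ≥ k`. -/
theorem demographicParity_iff_fairVisParity (G : SimpleGraph V) [Fintype V]
    (hconn : G.Connected)
    (y h : V → ℕ)
    (hy : ∀ w, y w = 0 ∨ y w = 1)
    (hh : ∀ w, h w = 0 ∨ h w = 1)
    (hTPR : ∃ u : V, y u = 1 ∧ h u = 1)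
    (hFPR : ∃ u : V, y u = 0 ∧ h u = 1)
    (Vc Vc' : Finset V) (hVc : Vc.Nonempty) (hVc' : Vc'.Nonempty) :
    ((Vc.filter fun v => h v = 1).card : ℝ) / (Vc.card : ℝ) =
        ((Vc'.filter fun v => h v = 1).card : ℝ) / (Vc'.card : ℝ) ↔
      ∃ k : ℕ, 0 < k ∧ ∀ δ : ℕ, k ≤ δ →
        fairVis G y h δ Vc = fairVis G y h δ Vc' :=
  demographicParity_iff_fairVisParity_general G hconn y h hy hh hTPR hFPR Vc Vc'
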